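/- Let Γ be a group acting linearly on a real vector space V, let η : Γ → {1, −1} be a group homomorphism with kernel Γ₊, and fix δ ∈ Γ with η(δ) = −1. Suppose u₁, …, u_s : V → ℝ are Γ₊-invariant functions such that every Γ₊-invariant function f : V → ℝ is a polynomial in u₁, …, u_s, i.e. f = q(u₁, …, u_s) for some real polynomial q in s variables. Then every Γ_η-invariant function h : V → ℝ can be written as h = p₁·S(u₁) + … + p_s·S(u_s) with each pᵢ : V → ℝ a Γ-invariant function. -/
import Mathlib


/-- The Reynolds operator `R(f)(x) = (f(x) + f(δ·x))/2`. -/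
noncomputable def reynoldsR {Γ V : Type*} [Group Γ] [AddCommGroup V] [Module ℝ V]
    [DistribMulAction Γ V] [SMulCommClass Γ ℝ V] (δ : Γ) (f : V → ℝ) : V → ℝ :=
  fun x => (f x + f (δ • x)) / 2

/-- The η-Reynolds operator `S(f)(x) = (f(x) − f(δ·x))/2`. -/
noncomputable def reynoldsS {Γ V : Type*} [Group Γ] [AddCommGroup V] [Module ℝ V]
    [DistribMulAction Γ V] [SMulCommClass Γ ℝ V] (δ : Γ) (f : V → ℝ) : V → ℝ :=
  fun x => (f x - f (δ • x)) / 2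

lemma key_decomp {s : ℕ} (q : MvPolynomial (Fin s) ℝ) :
    ∃ g : Fin s → (Fin s → ℝ) → (Fin s → ℝ) → ℝ,
      ∀ a b : Fin s → ℝ,
        MvPolynomial.eval a q - MvPolynomial.eval b q = ∑ i, g i a b * (a i - b i) := by
  induction q using MvPolynomial.induction_on with
  | C r => exact ⟨fun _ _ _ => 0, fun a b => by simp⟩
  | add p q hp hq =>
      obtain ⟨gp, hgp⟩ := hp; obtain ⟨gq, hgq⟩ := hq
      refine ⟨fun i a b => gp i a b + gq i a b, fun a b => ?_⟩
      have h1 := hgp a b; have h2 := hgq a b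
      simp only [MvPolynomial.eval_add, add_mul, Finset.sum_add_distrib]
      linarith
  | mul_X p i hp =>
      obtain ⟨gp, hgp⟩ := hp
      refine ⟨fun j a b => (if j = i then MvPolynomial.eval a p else 0) + gp j a b * b i,
        fun a b => ?_⟩
      have h1 := hgp a b
      simp only [MvPolynomial.eval_mul, MvPolynomial.eval_X, add_mul, ite_mul, zero_mul,
        Finset.sum_add_distrib, Finset.sum_ite_eq', Finset.mem_univ, if_true]
      have : ∑ j, gp j a b * b i * (a j - b j) = b i * ∑ j, gp j a b * (a j - b j) := by
        rw [Finset.mul_sum]; apply Finset.sum_congr rfl; intros; ring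
      rw [this, ← h1]; ring

/-- if `u₁, …, u_s` are `Γ₊`-invariant functions such that every
`Γ₊`-invariant function is a polynomial in them, then every `Γ_η`-invariant function `h`
can be written `h = Σᵢ pᵢ · S(uᵢ)` with each `pᵢ` a `Γ`-invariant function. -/
theorem eta_invariants_generated_by_S_of_hilbert_basis
    {Γ V : Type*} [Group Γ] [AddCommGroup V] [Module ℝ V]
    [DistribMulAction Γ V] [SMulCommClass Γ ℝ V]
    (η : Γ →* ℝˣ) (hη : ∀ γ : Γ, (η γ : ℝ) = 1 ∨ (η γ : ℝ) = -1)
    (δ : Γ) (hδ : (η δ : ℝ) = -1)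
    (s : ℕ) (u : Fin s → V → ℝ)
    (hu : ∀ i : Fin s, ∀ σ : Γ, (η σ : ℝ) = 1 → ∀ x : V, u i (σ • x) = u i x)
    (hgen : ∀ f : V → ℝ,
      (∀ σ : Γ, (η σ : ℝ) = 1 → ∀ x : V, f (σ • x) = f x) →
      ∃ q : MvPolynomial (Fin s) ℝ,
        ∀ x : V, f x = MvPolynomial.eval (fun i => u i x) q) :
    ∀ h : V → ℝ, (∀ γ : Γ, ∀ x : V, h (γ • x) = (η γ : ℝ) * h x) →
      ∃ p : Fin s → V → ℝ,
        (∀ i : Fin s, ∀ γ : Γ, ∀ x : V, p i (γ • x) = p i x) ∧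
        ∀ x : V, h x = ∑ i : Fin s, p i x * reynoldsS δ (u i) x := by
  intro h hh
  -- h is Γ₊-invariant
  obtain ⟨q, hq⟩ := hgen h (fun σ hσ x => by rw [hh σ x, hσ, one_mul])
  obtain ⟨g, hg⟩ := key_decomp q
  set a : V → Fin s → ℝ := fun x i => u i x with ha
  set b : V → Fin s → ℝ := fun x i => u i (δ • x) with hb
  -- transformation of a, b under γ
  have hab : ∀ γ : Γ, ∀ x : V,
      ((η γ : ℝ) = 1 → a (γ • x) = a x ∧ b (γ • x) = b x) ∧
      ((η γ : ℝ) = -1 → a (γ • x) = b x ∧ b (γ • x) = a x) := by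
    intro γ x
    constructor
    · intro h1
      constructor
      · funext i; exact hu i γ h1 x
      · funext i
        show u i (δ • γ • x) = u i (δ • x)
        have : δ • γ • x = (δ * γ * δ⁻¹) • (δ • x) := by
          simp [smul_smul, mul_assoc]
        rw [this]
        refine hu i _ ?_ _
        have : (η (δ * γ * δ⁻¹) : ℝ) = (η δ : ℝ) * (η γ : ℝ) * (η δ⁻¹ : ℝ) := by
          push_cast [map_mul]; ring
        have hδinv : (η δ⁻¹ : ℝ) = -1 := by
          have := map_inv η δ
          rw [this]
          have : (η δ) = (-1 : ℝˣ) := Units.ext hδ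
          rw [this]; simp
        rw [‹(η (δ * γ * δ⁻¹) : ℝ) = _›, h1, hδ, hδinv]; ring
    · intro h1
      constructor
      · funext i
        show u i (γ • x) = u i (δ • x)
        have : γ • x = (γ * δ⁻¹) • (δ • x) := by simp [smul_smul]
        rw [this]
        refine hu i _ ?_ _
        have hδinv : (η δ⁻¹ : ℝ) = -1 := by
          have := map_inv η δ
          rw [this]
          have : (η δ) = (-1 : ℝˣ) := Units.ext hδ
          rw [this]; simp
        have : (η (γ * δ⁻¹) : ℝ) = (η γ : ℝ) * (η δ⁻¹ : ℝ) := by push_cast [map_mul]; ring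
        rw [this, h1, hδinv]; ring
      · funext i
        show u i (δ • γ • x) = u i x
        have : δ • γ • x = (δ * γ) • x := by simp [smul_smul]
        rw [this]
        refine hu i _ ?_ _
        have : (η (δ * γ) : ℝ) = (η δ : ℝ) * (η γ : ℝ) := by push_cast [map_mul]; ring
        rw [this, h1, hδ]; ring
  refine ⟨fun i x => (g i (a x) (b x) + g i (b x) (a x)) / 2, ?_, ?_⟩
  · intro i γ x
    rcases hη γ with h1 | h1
    · obtain ⟨e1, e2⟩ := (hab γ x).1 h1
      simp only [e1, e2]
    · obtain ⟨e1, e2⟩ := (hab γ x).2 h1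
      simp only [e1, e2]; ring
  · intro x
    have hD : MvPolynomial.eval (a x) q - MvPolynomial.eval (b x) q = 2 * h x := by
      have h2 : h (δ • x) = -h x := by rw [hh δ x, hδ]; ring
      have e1 : h x = MvPolynomial.eval (a x) q := hq x
      have e2 : h (δ • x) = MvPolynomial.eval (b x) q := hq (δ • x)
      rw [← e1, ← e2, h2]; ring
    have hD2 : MvPolynomial.eval (b x) q - MvPolynomial.eval (a x) q
        = ∑ i, g i (b x) (a x) * (b x i - a x i) := hg (b x) (a x)
    have hD1 := hg (a x) (b x)
    have key : (2:ℝ) * h x = ∑ i, g i (a x) (b x) * (a x i - b x i) := by rw [← hD, hD1]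
    have key2 : (2:ℝ) * h x = ∑ i, g i (b x) (a x) * (a x i - b x i) := by
      have : -(2 * h x) = ∑ i, g i (b x) (a x) * (b x i - a x i) := by
        rw [← hD2]; linarith
      have := congrArg Neg.neg this
      rw [neg_neg, ← Finset.sum_neg_distrib] at this
      rw [this]
      apply Finset.sum_congr rfl; intros; ring
    have : ∑ i : Fin s, ((g i (a x) (b x) + g i (b x) (a x)) / 2) * reynoldsS δ (u i) x
        = ((∑ i, g i (a x) (b x) * (a x i - b x i))
          + ∑ i, g i (b x) (a x) * (a x i - b x i)) / 4 := by
      rw [← Finset.sum_add_distrib, Finset.sum_div]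
      apply Finset.sum_congr rfl; intro i _
      simp only [reynoldsS, ha, hb]
      ring
    rw [this, ← key, ← key2]; ring
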